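/- For every nonnegative integer n, the identity Σ_{k=1}^{n+1} (-2)^k / ((n-k+1)! (2k-1)!!) + 2/((2n+1) n!) = 0 holds. -/

import Mathlib

/-!
The sum telescopes. With `G k = 2 (-2)^k (n+1-k) / ((2n+1) (n+1-k)! (2k-1)‼)`, the `k`-th summand
is `G k - G (k-1)`: writing `m = n+1-k`, the difference is
`2 (-2)^(k-1) (-2m - (2k-1)) / ((2n+1) m! (2k-1)‼)`, and `2m + 2k - 1 = 2n+1` cancels the
denominator's `2n+1`. Hence the sum is `G (n+1) - G 0 = 0 - 2 / ((2n+1) n!)`.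
-/

open scoped Nat

open Finset in
theorem Finset.sum_Icc_one_eq_sum_range {M : Type*} [AddCommMonoid M] (f : ℕ → M) (n : ℕ) :
    ∑ k ∈ Icc 1 n, f k = ∑ i ∈ range n, f (i + 1) := by
  rw [range_eq_Ico, ← Ico_add_one_right_eq_Icc, sum_Ico_add']

noncomputable def telescopingTerm (n k : ℕ) : ℝ :=
  2 * (-2) ^ k * (n + 1 - k : ℕ) / ((2 * n + 1) * (n + 1 - k)! * (2 * k - 1)‼)

lemma telescopingTerm_zero (n : ℕ) : telescopingTerm n 0 = 2 / ((2 * n + 1) * n !) := by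
  rw [telescopingTerm, Nat.sub_zero, Nat.factorial_succ]
  push_cast
  field_simp
  simp

lemma telescopingTerm_succ_self (n : ℕ) : telescopingTerm n (n + 1) = 0 := by
  simp [telescopingTerm]

lemma telescopingTerm_succ_sub {n k : ℕ} (hk : k ≤ n) :
    telescopingTerm n (k + 1) - telescopingTerm n k
      = (-2) ^ (k + 1) / ((n - k)! * (2 * k + 1)‼) := by
  obtain ⟨m, rfl⟩ := Nat.exists_eq_add_of_le' hk
  have hm : m + k + 1 - (k + 1) = m := by omega
  have hm' : m + k + 1 - k = m + 1 := by omega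
  have hodd : 2 * (k + 1) - 1 = 2 * k + 1 := by omega
  rw [telescopingTerm, telescopingTerm, hm, hm', hodd, Nat.add_sub_cancel,
    Nat.doubleFactorial_add_one (2 * k), Nat.factorial_succ]
  push_cast
  field_simp
  ring

theorem basic_identity (n : ℕ) :
    ∑ k ∈ Finset.Icc 1 (n + 1),
        (-2 : ℝ) ^ k / (((n - k + 1)! : ℝ) * ((2 * k - 1)‼ : ℝ))
      + 2 / ((2 * n + 1) * (n ! : ℝ)) = 0 := by
  have hsum : ∑ k ∈ Finset.Icc 1 (n + 1),
      (-2 : ℝ) ^ k / (((n - k + 1)! : ℝ) * ((2 * k - 1)‼ : ℝ))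
        = ∑ i ∈ Finset.range (n + 1), (telescopingTerm n (i + 1) - telescopingTerm n i) := by
    rw [Finset.sum_Icc_one_eq_sum_range]
    refine Finset.sum_congr rfl fun i hi_mem => ?_
    have hi : i ≤ n := Nat.lt_succ_iff.mp (Finset.mem_range.mp hi_mem)
    -- at `i = n` the truncated subtraction makes the two arguments `1` and `0`
    have hfac : (n - (i + 1) + 1)! = (n - i)! := by
      rcases hi.lt_or_eq with hlt | rfl
      · congr 1; omega
      · simp
    have hodd : 2 * (i + 1) - 1 = 2 * i + 1 := by omega
    rw [telescopingTerm_succ_sub hi, hfac, hodd]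
  rw [hsum, Finset.sum_range_sub, telescopingTerm_succ_self, telescopingTerm_zero]
  ring
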